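/- Let s be a proper scoring rule on 𝒫 that is continuous (with respect to pointwise convergence on 𝒫 and the product of the order topology on [-∞,M]^Ω), and suppose s(q) is finite for every regular probability function q. Then the function p ↦ E_p s(p) is continuous at every point of 𝒫. -/

import Mathlib

open Filter Topology

variable {Ω : Type*}

/-- A probability function: nonnegative, finitely additive, total mass one. -/
def IsProbability [Fintype Ω] (p : Set Ω → ℝ) : Prop :=
  (∀ A, 0 ≤ p A) ∧ (∀ A B : Set Ω, Disjoint A B → p (A ∪ B) = p A + p B) ∧ p Set.univ = 1

/-- Expected value `E_p f = Σ_{ω, p({ω}) ≠ 0} p({ω}) f(ω)`.  Since `EReal`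
multiplication satisfies `0 * a = a * 0 = 0` even for infinite `a`, the zero terms
contribute nothing and we may sum over all of `Ω`. -/
noncomputable def expScore [Fintype Ω] (p : Set Ω → ℝ) (f : Ω → EReal) : EReal :=
  ∑ ω, (p {ω} : EReal) * f ω

/-- A score is finite when all of its values are finite. -/
def FiniteScore (f : Ω → EReal) : Prop := ∀ ω, f ω ≠ ⊥ ∧ f ω ≠ ⊤

/-- The topology of pointwise convergence of `p({ω})`, `ω ∈ Ω`, on credence
functions: the topology induced by the map `p ↦ (ω ↦ p {ω})` into `Ω → ℝ`. -/
def singletonTopology (Ω : Type*) [Fintype Ω] : TopologicalSpace (Set Ω → ℝ) :=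
  TopologicalSpace.induced (fun p (ω : Ω) => p {ω}) inferInstance

/-- coercion of a finite real sum to `EReal`. -/
lemma my_coe_sum {ι : Type*} (A : Finset ι) (g : ι → ℝ) :
    ((∑ i ∈ A, g i : ℝ) : EReal) = ∑ i ∈ A, (g i : EReal) := by
  induction A using Finset.cons_induction with
  | empty => simp
  | cons i A hi ih => simp [Finset.sum_cons, EReal.coe_add, ih]

/-- A finite sum of `EReal`s, none of which is `⊤`, is not `⊤`. -/
lemma my_sum_ne_top {ι : Type*} (A : Finset ι) (a : ι → EReal)
    (ha : ∀ i ∈ A, a i ≠ ⊤) : ∑ i ∈ A, a i ≠ ⊤ := by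
  induction A using Finset.cons_induction with
  | empty => simp
  | cons i A hi ih =>
    rw [Finset.sum_cons]
    exact (EReal.add_lt_top (ha i (Finset.mem_cons_self i A))
      (ih fun j hj => ha j (Finset.mem_cons_of_mem hj))).ne

/-- Tendsto of finite sums in `EReal` when all the limits avoid `⊤`. -/
lemma my_tendsto_sum {ι β : Type*} {l : Filter β} (A : Finset ι) (f : ι → β → EReal)
    (a : ι → EReal) (ha : ∀ i ∈ A, a i ≠ ⊤)
    (hf : ∀ i ∈ A, Tendsto (f i) l (𝓝 (a i))) :
    Tendsto (fun b => ∑ i ∈ A, f i b) l (𝓝 (∑ i ∈ A, a i)) := by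
  induction A using Finset.cons_induction with
  | empty => simpa using tendsto_const_nhds
  | cons i A hi ih =>
    have h1 : Tendsto (f i) l (𝓝 (a i)) := hf i (Finset.mem_cons_self i A)
    have h2 : Tendsto (fun b => ∑ j ∈ A, f j b) l (𝓝 (∑ j ∈ A, a j)) :=
      ih (fun j hj => ha j (Finset.mem_cons_of_mem hj))
        (fun j hj => hf j (Finset.mem_cons_of_mem hj))
    have hne1 : a i ≠ ⊤ := ha i (Finset.mem_cons_self i A)
    have hne2 : ∑ j ∈ A, a j ≠ ⊤ :=
      my_sum_ne_top A a fun j hj => ha j (Finset.mem_cons_of_mem hj)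
    have hadd : ContinuousAt (fun p : EReal × EReal => p.1 + p.2) (a i, ∑ j ∈ A, a j) :=
      EReal.continuousAt_add (Or.inl hne1) (Or.inr hne2)
    simpa [Finset.sum_cons, Function.comp_def] using hadd.tendsto.comp (h1.prodMk_nhds h2)

/-- Multiplication by a (varying) positive real coefficient is continuous on `EReal`. -/
lemma my_tendsto_mul_pos {β : Type*} {l : Filter β} {c : ℝ} (hc : 0 < c)
    {u : β → ℝ} {g : β → EReal} {x : EReal}
    (hu : Tendsto u l (𝓝 c)) (hg : Tendsto g l (𝓝 x)) :
    Tendsto (fun b => (u b : EReal) * g b) l (𝓝 ((c : EReal) * x)) := by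
  have hmul : ContinuousAt (fun p : EReal × EReal => p.1 * p.2) ((c : EReal), x) :=
    EReal.continuousAt_mul (Or.inl (by simp [EReal.coe_eq_zero, hc.ne']))
      (Or.inl (by simp [EReal.coe_eq_zero, hc.ne'])) (Or.inl (EReal.coe_ne_bot c))
      (Or.inl (EReal.coe_ne_top c))
  exact hmul.tendsto.comp (((continuous_coe_real_ereal.tendsto c).comp hu).prodMk_nhds hg)

/-- A nonnegative real multiple of something bounded above by a real is not `⊤`. -/
lemma my_mul_ne_top {c : ℝ} (hc : 0 ≤ c) {x : EReal} {M : ℝ} (hx : x ≤ (M : EReal)) :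
    (c : EReal) * x ≠ ⊤ := by
  rcases eq_or_lt_of_le hc with h | h
  · simp [← h]
  · have : (c : EReal) * x ≤ (c : EReal) * (M : EReal) :=
      mul_le_mul_of_nonneg_left hx (by exact_mod_cast h.le)
    rw [← EReal.coe_mul] at this
    exact (this.trans_lt (EReal.coe_lt_top _)).ne

theorem stmt18 [Fintype Ω] [Nonempty Ω] (M : ℝ)
    (s : (Set Ω → ℝ) → Ω → EReal)
    (hbound : ∀ p, IsProbability p → ∀ ω, s p ω ≤ (M : EReal))
    (hproper : ∀ p q, IsProbability p → IsProbability q →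
      expScore p (s q) ≤ expScore p (s p))
    (hcont : @ContinuousOn (Set Ω → ℝ) (Ω → EReal) (singletonTopology Ω) _
      s {p | IsProbability p})
    (hregfin : ∀ q, IsProbability q → (∀ ω : Ω, 0 < q {ω}) →
      FiniteScore (s q)) :
    ∀ p, IsProbability p →
      @ContinuousWithinAt (Set Ω → ℝ) EReal (singletonTopology Ω) _
        (fun q => expScore q (s q)) {q | IsProbability q} p := by
  classical
  letI : TopologicalSpace (Set Ω → ℝ) := singletonTopology Ω
  intro p hp
  set S : Set (Set Ω → ℝ) := {q | IsProbability q} with hSdef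
  set F : (Set Ω → ℝ) → EReal := fun q => expScore q (s q) with hFdef
  show Tendsto F (𝓝[S] p) (𝓝 (F p))
  by_cases hbot : (𝓝[S] p) = ⊥
  · rw [hbot]; exact tendsto_bot
  haveI hne : (𝓝[S] p).NeBot := ⟨hbot⟩
  set l := 𝓝[S] p with hldef
  have hmem : ∀ᶠ q in l, IsProbability q := eventually_mem_nhdsWithin
  -- coordinate convergence
  have hπ : Continuous (fun (q : Set Ω → ℝ) (ω : Ω) => q {ω}) := continuous_induced_dom
  have hcoord : ∀ ω : Ω, Tendsto (fun q : Set Ω → ℝ => q {ω}) l (𝓝 (p {ω})) := fun ω =>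
    (((continuous_apply ω).comp hπ).tendsto p).mono_left nhdsWithin_le_nhds
  -- convergence of the score
  have hS : ∀ ω : Ω, Tendsto (fun q => s q ω) l (𝓝 (s p ω)) := by
    intro ω
    have := hcont p hp
    exact tendsto_pi_nhds.1 this ω
  -- the limit terms
  set T : Ω → EReal := fun ω => (p {ω} : EReal) * s p ω with hTdef
  have hpnn : ∀ ω : Ω, 0 ≤ p {ω} := fun ω => hp.1 _
  have hT_ne_top : ∀ ω : Ω, T ω ≠ ⊤ := fun ω =>
    my_mul_ne_top (hpnn ω) (hbound p hp ω)
  have hterm : ∀ ω : Ω, p {ω} ≠ 0 →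
      Tendsto (fun q => (q {ω} : EReal) * s q ω) l (𝓝 (T ω)) := fun ω hω =>
    my_tendsto_mul_pos (lt_of_le_of_ne (hpnn ω) (Ne.symm hω)) (hcoord ω) (hS ω)
  -- ### upper bound : limsup F l ≤ F p
  set A : Finset Ω := Finset.univ.filter (fun ω => p {ω} ≠ 0) with hAdef
  set Z : Finset Ω := Finset.univ.filter (fun ω => ¬ p {ω} ≠ 0) with hZdef
  have hsplit : ∀ (g : Ω → EReal), ∑ ω ∈ A, g ω + ∑ ω ∈ Z, g ω = ∑ ω, g ω := fun g =>
    Finset.sum_filter_add_sum_filter_not _ _ _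
  set M' : ℝ := max M 0 with hM'def
  set H : (Set Ω → ℝ) → EReal := fun q => ∑ ω ∈ A, (q {ω} : EReal) * s q ω with hHdef
  set r : (Set Ω → ℝ) → EReal := fun q => ((∑ ω ∈ Z, q {ω} * M' : ℝ) : EReal) with hrdef
  have hFp_eq : F p = ∑ ω ∈ A, T ω := by
    rw [hFdef]
    show expScore p (s p) = _
    rw [expScore, ← hsplit (fun ω => (p {ω} : EReal) * s p ω)]
    have : ∑ ω ∈ Z, (p {ω} : EReal) * s p ω = 0 := by
      apply Finset.sum_eq_zero
      intro ω hω
      have : p {ω} = 0 := by simpa [hZdef] using hω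
      simp [this]
    rw [this, add_zero]
  have hH : Tendsto H l (𝓝 (F p)) := by
    rw [hFp_eq]
    exact my_tendsto_sum A _ T (fun ω _ => hT_ne_top ω)
      (fun ω hω => hterm ω (by simpa [hAdef] using hω))
  have hr : Tendsto r l (𝓝 (0 : EReal)) := by
    have hreal : Tendsto (fun q : Set Ω → ℝ => (∑ ω ∈ Z, q {ω} * M' : ℝ)) l
        (𝓝 (∑ ω ∈ Z, p {ω} * M')) :=
      tendsto_finset_sum _ (fun ω _ => (hcoord ω).mul tendsto_const_nhds)
    have hzero : (∑ ω ∈ Z, p {ω} * M') = 0 := by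
      apply Finset.sum_eq_zero
      intro ω hω
      have : p {ω} = 0 := by simpa [hZdef] using hω
      simp [this]
    rw [hzero] at hreal
    have := (continuous_coe_real_ereal.tendsto 0).comp hreal
    rw [EReal.coe_zero] at this; exact this
  have hFle : ∀ᶠ q in l, F q ≤ H q + r q := by
    filter_upwards [hmem] with q hq
    have hdecomp : F q = H q + ∑ ω ∈ Z, (q {ω} : EReal) * s q ω := by
      rw [hFdef, hHdef]
      show expScore q (s q) = _
      rw [expScore, ← hsplit (fun ω => (q {ω} : EReal) * s q ω)]
    rw [hdecomp]
    apply add_le_add le_rfl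
    rw [hrdef]
    show _ ≤ ((∑ ω ∈ Z, q {ω} * M' : ℝ) : EReal)
    rw [my_coe_sum]
    apply Finset.sum_le_sum
    intro ω _
    have h1 : s q ω ≤ (M' : EReal) := by
      refine (hbound q hq ω).trans ?_
      exact_mod_cast le_max_left M 0
    calc (q {ω} : EReal) * s q ω ≤ (q {ω} : EReal) * (M' : EReal) :=
          mul_le_mul_of_nonneg_left h1 (by exact_mod_cast hq.1 _)
      _ = ((q {ω} * M' : ℝ) : EReal) := (EReal.coe_mul _ _).symm
  have hHr : Tendsto (fun q => H q + r q) l (𝓝 (F p)) := by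
    have hFp_ne_top : F p ≠ ⊤ := by
      rw [hFp_eq]; exact my_sum_ne_top A T (fun ω _ => hT_ne_top ω)
    have hadd : ContinuousAt (fun x : EReal × EReal => x.1 + x.2) (F p, 0) :=
      EReal.continuousAt_add (Or.inl hFp_ne_top) (Or.inr (by simp))
    have := hadd.tendsto.comp (hH.prodMk_nhds hr)
    simpa [Function.comp_def] using this
  have hlimsup : limsup F l ≤ F p := by
    calc limsup F l ≤ limsup (fun q => H q + r q) l := limsup_le_limsup hFle
      _ = F p := hHr.limsup_eq
  -- ### lower bound : F p ≤ liminf F l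
  have hcard : (0 : ℝ) < Fintype.card Ω := by
    exact_mod_cast Fintype.card_pos
  set u : Set Ω → ℝ := fun B => (B.ncard : ℝ) / Fintype.card Ω with hudef
  have hu_nn : ∀ B, 0 ≤ u B := fun B => div_nonneg (Nat.cast_nonneg _) hcard.le
  have hu_add : ∀ B C : Set Ω, Disjoint B C → u (B ∪ C) = u B + u C := by
    intro B C hBC
    rw [hudef]
    show ((B ∪ C).ncard : ℝ) / _ = _
    rw [Set.ncard_union_eq hBC (Set.toFinite B) (Set.toFinite C)]
    push_cast
    ring
  have hu_univ : u Set.univ = 1 := by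
    rw [hudef]
    show ((Set.univ : Set Ω).ncard : ℝ) / _ = 1
    rw [Set.ncard_univ, Nat.card_eq_fintype_card]
    exact div_self hcard.ne'
  have hu_single : ∀ ω : Ω, 0 < u {ω} := by
    intro ω
    rw [hudef]
    show (0:ℝ) < (({ω} : Set Ω).ncard : ℝ) / _
    rw [Set.ncard_singleton]
    positivity
  set ε : ℕ → ℝ := fun n => 1 / (n + 1) with hεdef
  have hε_pos : ∀ n, 0 < ε n := fun n => by positivity
  have hε_le : ∀ n, ε n ≤ 1 := fun n => by
    rw [hεdef]
    show 1 / ((n:ℝ) + 1) ≤ 1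
    rw [div_le_one (by positivity)]
    linarith [Nat.cast_nonneg (α := ℝ) n]
  have hε0 : Tendsto ε atTop (𝓝 0) := tendsto_one_div_add_atTop_nhds_zero_nat
  set qn : ℕ → Set Ω → ℝ := fun n B => (1 - ε n) * p B + ε n * u B with hqndef
  have hqn_prob : ∀ n, IsProbability (qn n) := by
    intro n
    refine ⟨fun B => add_nonneg (mul_nonneg (by linarith [hε_le n]) (hp.1 B))
      (mul_nonneg (hε_pos n).le (hu_nn B)), fun B C hBC => ?_, ?_⟩
    · show (1 - ε n) * p (B ∪ C) + ε n * u (B ∪ C) = _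
      rw [hp.2.1 B C hBC, hu_add B C hBC]; ring
    · show (1 - ε n) * p Set.univ + ε n * u Set.univ = 1
      rw [hp.2.2, hu_univ]; ring
  have hqn_pos : ∀ n (ω : Ω), 0 < qn n {ω} := by
    intro n ω
    have h1 : 0 ≤ (1 - ε n) * p {ω} := mul_nonneg (by linarith [hε_le n]) (hp.1 _)
    have h2 : 0 < ε n * u {ω} := mul_pos (hε_pos n) (hu_single ω)
    show 0 < (1 - ε n) * p {ω} + ε n * u {ω}
    linarith
  have hqn_tendsto : Tendsto qn atTop l := by
    rw [hldef, tendsto_nhdsWithin_iff]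
    constructor
    · rw [show 𝓝 p = Filter.comap (fun (q : Set Ω → ℝ) (ω : Ω) => q {ω}) (𝓝 (fun ω => p {ω})) from nhds_induced _ _, tendsto_comap_iff]
      rw [tendsto_pi_nhds]
      intro ω
      have : Tendsto (fun n => (1 - ε n) * p {ω} + ε n * u {ω}) atTop
          (𝓝 ((1 - 0) * p {ω} + 0 * u {ω})) :=
        ((tendsto_const_nhds.sub hε0).mul tendsto_const_nhds).add
          (hε0.mul tendsto_const_nhds)
      simpa using this
    · exact Eventually.of_forall fun n => hqn_prob n
  have hsqn : Tendsto (fun n => s (qn n)) atTop (𝓝 (s p)) := Filter.Tendsto.comp (hcont p hp) hqn_tendsto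
  have hsqnω : ∀ ω : Ω, Tendsto (fun n => s (qn n) ω) atTop (𝓝 (s p ω)) :=
    fun ω => tendsto_pi_nhds.1 hsqn ω
  -- each approximant gives a lower bound on the liminf
  have hlb : ∀ n : ℕ, expScore p (s (qn n)) ≤ liminf F l := by
    intro n
    have hfin : FiniteScore (s (qn n)) := hregfin (qn n) (hqn_prob n) (hqn_pos n)
    have hev : ∀ᶠ q in l, expScore q (s (qn n)) ≤ F q := by
      filter_upwards [hmem] with q hq
      exact hproper q (qn n) hq (hqn_prob n)
    have hliminf_le : liminf (fun q => expScore q (s (qn n))) l ≤ liminf F l :=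
      liminf_le_liminf hev
    -- the left liminf is the actual limit, by continuity (finite score!)
    have hcoe : ∀ q : Set Ω → ℝ, expScore q (s (qn n)) =
        ((∑ ω, q {ω} * (s (qn n) ω).toReal : ℝ) : EReal) := by
      intro q
      rw [expScore, my_coe_sum]
      apply Finset.sum_congr rfl
      intro ω _
      rw [EReal.coe_mul, EReal.coe_toReal (hfin ω).2 (hfin ω).1]
    have hreal : Tendsto (fun q : Set Ω → ℝ => (∑ ω, q {ω} * (s (qn n) ω).toReal : ℝ)) l
        (𝓝 (∑ ω, p {ω} * (s (qn n) ω).toReal)) :=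
      tendsto_finset_sum _ (fun ω _ => (hcoord ω).mul tendsto_const_nhds)
    have htdsto : Tendsto (fun q => expScore q (s (qn n))) l (𝓝 (expScore p (s (qn n)))) := by
      rw [hcoe p]
      have := (continuous_coe_real_ereal.tendsto _).comp hreal
      refine this.congr fun q => ?_
      exact (hcoe q).symm
    rw [← htdsto.liminf_eq] at *
    exact hliminf_le
  -- the approximants converge to F p
  have happrox : Tendsto (fun n => expScore p (s (qn n))) atTop (𝓝 (F p)) := by
    have : F p = ∑ ω, T ω := by rw [hFdef]; rfl
    rw [this]
    apply my_tendsto_sum Finset.univ (fun ω n => (p {ω} : EReal) * s (qn n) ω) T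
      (fun ω _ => hT_ne_top ω)
    intro ω _
    by_cases hω : p {ω} = 0
    · have hT0 : T ω = 0 := by rw [hTdef]; simp [hω]
      rw [hT0]
      have : (fun n => (p {ω} : EReal) * s (qn n) ω) = fun _ => 0 := by
        funext n; simp [hω]
      rw [this]
      exact tendsto_const_nhds
    · exact my_tendsto_mul_pos (lt_of_le_of_ne (hpnn ω) (Ne.symm hω))
        tendsto_const_nhds (hsqnω ω)
  have hliminf : F p ≤ liminf F l := le_of_tendsto' happrox hlb
  exact tendsto_of_le_liminf_of_limsup_le hliminf hlimsup
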